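/- Let (M, g, J) be an almost Hermitian 4-manifold whose Riemann curvature, viewed as a symmetric endomorphism R of Lambda^2 M, satisfies: the Ricci tensor is J-invariant and the component W^+_2 of the self-dual Weyl tensor vanishes. Then for every J-anti-invariant self-dual 2-form psi, R(psi) is again a J-anti-invariant self-dual 2-form plus an anti-self-dual 2-form whose inner product with Omega vanishes; more precisely, <R(psi), Omega> = 0. -/

import Mathlib

open RealInnerProductSpace

noncomputable section

/-- The oriented Euclidean 4-space (model of a tangent space of an almost Hermitian
4-manifold). -/
abbrev E : Type := EuclideanSpace ℝ (Fin 4)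

/-- The standard (oriented, orthonormal) basis of `E`. -/
def e (i : Fin 4) : E := EuclideanSpace.single i 1

/-- `φ : E → E → ℝ` is a 2-form: bilinear and alternating. -/
def IsTwoForm (φ : E → E → ℝ) : Prop :=
  (∀ x y z : E, φ (x + y) z = φ x z + φ y z) ∧
  (∀ (c : ℝ) (x y : E), φ (c • x) y = c * φ x y) ∧
  (∀ x y : E, φ x y = -φ y x)

/-- A 2-form is self-dual iff `φ₁₂ = φ₃₄`, `φ₁₃ = φ₄₂`, `φ₁₄ = φ₂₃`. -/
def SelfDual (φ : E → E → ℝ) : Prop :=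
  φ (e 0) (e 1) = φ (e 2) (e 3) ∧ φ (e 0) (e 2) = φ (e 3) (e 1) ∧
    φ (e 0) (e 3) = φ (e 1) (e 2)

/-- A 2-form is anti-self-dual iff `φ₁₂ = -φ₃₄`, `φ₁₃ = -φ₄₂`, `φ₁₄ = -φ₂₃`. -/
def AntiSelfDual (φ : E → E → ℝ) : Prop :=
  φ (e 0) (e 1) = -φ (e 2) (e 3) ∧ φ (e 0) (e 2) = -φ (e 3) (e 1) ∧
    φ (e 0) (e 3) = -φ (e 1) (e 2)

/-- The inner product on 2-forms, normalized so that `|Ω|² = 2`. -/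
def formInner (φ ψ : E → E → ℝ) : ℝ :=
  (1 / 2) * ∑ i : Fin 4, ∑ j : Fin 4, φ (e i) (e j) * ψ (e i) (e j)

/-- The action of the curvature operator (encoded by its 4-tensor) on a 2-form:
`(Rψ)(x,y) = (1/2) Σ_{i,j} R(x,y,eᵢ,eⱼ) ψ(eᵢ,eⱼ)`. -/
def RF (R : E →ₗ[ℝ] E →ₗ[ℝ] E →ₗ[ℝ] E →ₗ[ℝ] ℝ) (ψ : E → E → ℝ) : E → E → ℝ :=
  fun x y => (1 / 2) * ∑ i : Fin 4, ∑ j : Fin 4, R x y (e i) (e j) * ψ (e i) (e j)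

/-- The fundamental form `Ω(x,y) = ⟨Jx, y⟩`. -/
def Omg (J : E →ₗ[ℝ] E) : E → E → ℝ := fun x y => ⟪J x, y⟫

/-! In the oriented orthonormal basis `e`, a positively oriented orthogonal complex structure `J`
is left multiplication by a unit imaginary quaternion. Hence `J^*` acts on `Λ⁻` as the identity
and on `Λ⁺` as the reflection fixing `Ω`: for every 2-form `φ`, `φ - J^*φ` is self-dual and
`J`-anti-invariant, while `φ + J^*φ` is anti-self-dual as soon as `⟨φ, Ω⟩ = 0`. For `φ = R(ψ)`
the symmetry of `R` gives `⟨Rψ, Ω⟩ = ⟨RΩ, ψ⟩ = 0` by `W⁺₂ = 0`, and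
`Rψ = ½ (φ - J^*φ) + ½ (φ + J^*φ)` is the required splitting. -/

lemma inner_map_eq_neg_inner_map {F : Type*} [NormedAddCommGroup F] [InnerProductSpace ℝ F]
    {J : F →ₗ[ℝ] F} (hJ2 : ∀ x, J (J x) = -x) (hJo : ∀ x y, ⟪J x, J y⟫ = ⟪x, y⟫) (x y : F) :
    ⟪J x, y⟫ = -⟪x, J y⟫ := by
  rw [← hJo, hJ2, inner_neg_left]

lemma e_eq_basisFun (i : Fin 4) : e i = EuclideanSpace.basisFun (Fin 4) ℝ i := by
  simp [e]

lemma inner_e_e (i j : Fin 4) : ⟪e i, e j⟫ = if i = j then 1 else 0 := by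
  simp only [e_eq_basisFun]
  exact orthonormal_iff_ite.mp (EuclideanSpace.basisFun (Fin 4) ℝ).orthonormal i j

lemma sum_inner_e_smul_e (x : E) : ∑ j, ⟪x, e j⟫ • e j = x := by
  simpa only [e_eq_basisFun, real_inner_comm x] using
    (EuclideanSpace.basisFun (Fin 4) ℝ).sum_repr' x

lemma inner_eq_sum_inner_e (x y : E) : ⟪x, y⟫ = ∑ k, ⟪x, e k⟫ * ⟪y, e k⟫ := by
  simpa only [e_eq_basisFun, real_inner_comm y] using
    ((EuclideanSpace.basisFun (Fin 4) ℝ).sum_inner_mul_inner x y).symm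

/-- `a, b, c, d, f, g` are the entries `M₀₁, M₀₂, M₀₃, M₁₂, M₁₃, M₂₃` of a skew-symmetric
orthogonal `4 × 4` matrix `M`; positive Pfaffian makes `M` self-dual. -/
lemma eq_of_skew_orthogonal_of_pfaffian_pos {a b c d f g : ℝ} (h0 : a ^ 2 + b ^ 2 + c ^ 2 = 1)
    (h1 : a ^ 2 + d ^ 2 + f ^ 2 = 1) (h2 : b ^ 2 + d ^ 2 + g ^ 2 = 1)
    (h3 : c ^ 2 + f ^ 2 + g ^ 2 = 1) (h01 : b * d + c * f = 0) (h02 : a * d - c * g = 0)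
    (h03 : a * f + b * g = 0) (hpos : 0 < a * g - b * f + c * d) :
    g = a ∧ f = -b ∧ d = c := by
  have hsq : (a * g - b * f + c * d) ^ 2 = 1 := by
    linear_combination (d ^ 2 + f ^ 2 + g ^ 2) * h0 + (h1 + h2 + h3 - h0) / 2
      - (b * d + c * f) * h01 - (a * d - c * g) * h02 - (a * f + b * g) * h03
  have hpf : a * g - b * f + c * d = 1 := by nlinarith
  have hzero : (a - g) ^ 2 + (b + f) ^ 2 + (c - d) ^ 2 = 0 := by
    linear_combination h0 + (h1 + h2 + h3 - h0) / 2 - 2 * hpf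
  refine ⟨?_, ?_, ?_⟩ <;> nlinarith [sq_nonneg (a - g), sq_nonneg (b + f), sq_nonneg (c - d)]

/-- Under `E ≅ ℍ`, `e 0, e 1, e 2, e 3 ↦ 1, i, j, k`, `J` is left multiplication by the unit
imaginary quaternion `a i + b j + c k`. -/
structure IsLeftMulQuaternion (J : E →ₗ[ℝ] E) (a b c : ℝ) : Prop where
  sq_add_sq_add_sq : a ^ 2 + b ^ 2 + c ^ 2 = 1
  apply_e0 : J (e 0) = a • e 1 + b • e 2 + c • e 3
  apply_e1 : J (e 1) = -a • e 0 + c • e 2 - b • e 3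
  apply_e2 : J (e 2) = -b • e 0 - c • e 1 + a • e 3
  apply_e3 : J (e 3) = -c • e 0 + b • e 1 - a • e 2

theorem exists_isLeftMulQuaternion {J : E →ₗ[ℝ] E} (hJ2 : ∀ x, J (J x) = -x)
    (hJo : ∀ x y : E, ⟪J x, J y⟫ = ⟪x, y⟫)
    (horient : 0 < ⟪J (e 0), e 1⟫ * ⟪J (e 2), e 3⟫ - ⟪J (e 0), e 2⟫ * ⟪J (e 1), e 3⟫
      + ⟪J (e 0), e 3⟫ * ⟪J (e 1), e 2⟫) :
    ∃ a b c, IsLeftMulQuaternion J a b c := by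
  have skew (i j : Fin 4) : ⟪J (e j), e i⟫ = -⟪J (e i), e j⟫ := by
    rw [inner_map_eq_neg_inner_map hJ2 hJo, real_inner_comm]
  have diag (i : Fin 4) : ⟪J (e i), e i⟫ = 0 := by linarith [skew i i]
  have orth (i j : Fin 4) :
      ∑ k, ⟪J (e i), e k⟫ * ⟪J (e j), e k⟫ = if i = j then 1 else 0 := by
    rw [← inner_e_e, ← hJo, inner_eq_sum_inner_e]
  obtain ⟨h0, h1, h2, h3, h01, h02, h03⟩ : _ ∧ _ ∧ _ ∧ _ ∧ _ ∧ _ ∧ _ :=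
    ⟨orth 0 0, orth 1 1, orth 2 2, orth 3 3, orth 0 1, orth 0 2, orth 0 3⟩
  simp only [Fin.sum_univ_four, diag, skew 0 1, skew 0 2, skew 0 3, skew 1 2, skew 1 3, skew 2 3,
    if_true, Fin.reduceEq, if_false] at h0 h1 h2 h3 h01 h02 h03
  obtain ⟨hga, hfb, hdc⟩ := eq_of_skew_orthogonal_of_pfaffian_pos (by linear_combination h0)
    (by linear_combination h1) (by linear_combination h2) (by linear_combination h3)
    (by linear_combination h01) (by linear_combination -h02) (by linear_combination -h03) horient
  refine ⟨⟪J (e 0), e 1⟫, ⟪J (e 0), e 2⟫, ⟪J (e 0), e 3⟫, by linear_combination h0,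
    ?_, ?_, ?_, ?_⟩ <;>
  · conv_lhs => rw [← sum_inner_e_smul_e (J _), Fin.sum_univ_four]
    simp only [diag, skew 0 1, skew 0 2, skew 0 3, skew 1 2, skew 1 3, skew 2 3, hga, hfb, hdc]
    module

namespace IsTwoForm

variable {φ χ : E → E → ℝ}

lemma add_right (h : IsTwoForm φ) (x y z : E) : φ x (y + z) = φ x y + φ x z := by
  rw [h.2.2, h.1, h.2.2 y, h.2.2 z]; ring

lemma smul_right (h : IsTwoForm φ) (c : ℝ) (x y : E) : φ x (c • y) = c * φ x y := by
  rw [h.2.2, h.2.1, h.2.2 y]; ring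

lemma apply_self (h : IsTwoForm φ) (x : E) : φ x x = 0 := by
  linarith [h.2.2 x x]

def toBilin (h : IsTwoForm φ) : E →ₗ[ℝ] E →ₗ[ℝ] ℝ :=
  LinearMap.mk₂ ℝ φ h.1 h.2.1 h.add_right h.smul_right

@[simp]
lemma toBilin_apply (h : IsTwoForm φ) (x y : E) : h.toBilin x y = φ x y := rfl

lemma add (hφ : IsTwoForm φ) (hχ : IsTwoForm χ) : IsTwoForm (φ + χ) :=
  ⟨fun x y z => by simp only [Pi.add_apply, hφ.1, hχ.1]; ring,
    fun c x y => by simp only [Pi.add_apply, hφ.2.1, hχ.2.1]; ring,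
    fun x y => by simp only [Pi.add_apply, hφ.2.2 x, hχ.2.2 x]; ring⟩

lemma sub (hφ : IsTwoForm φ) (hχ : IsTwoForm χ) : IsTwoForm (φ - χ) :=
  ⟨fun x y z => by simp only [Pi.sub_apply, hφ.1, hχ.1]; ring,
    fun c x y => by simp only [Pi.sub_apply, hφ.2.1, hχ.2.1]; ring,
    fun x y => by simp only [Pi.sub_apply, hφ.2.2 x, hχ.2.2 x]; ring⟩

lemma smul (h : IsTwoForm φ) (c : ℝ) : IsTwoForm (c • φ) :=
  ⟨fun x y z => by simp only [Pi.smul_apply, smul_eq_mul, h.1]; ring,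
    fun c x y => by simp only [Pi.smul_apply, smul_eq_mul, h.2.1]; ring,
    fun x y => by simp only [Pi.smul_apply, smul_eq_mul, h.2.2 x]; ring⟩

end IsTwoForm

lemma SelfDual.smul {φ : E → E → ℝ} (h : SelfDual φ) (c : ℝ) : SelfDual (c • φ) := by
  simp only [SelfDual, Pi.smul_apply, h.1, h.2.1, h.2.2, and_self]

lemma AntiSelfDual.smul {φ : E → E → ℝ} (h : AntiSelfDual φ) (c : ℝ) : AntiSelfDual (c • φ) := by
  simp only [AntiSelfDual, Pi.smul_apply, smul_neg, h.1, h.2.1, h.2.2, and_self]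

def pullback (A : E →ₗ[ℝ] E) (φ : E → E → ℝ) : E → E → ℝ := fun x y => φ (A x) (A y)

lemma IsTwoForm.pullback {φ : E → E → ℝ} (h : IsTwoForm φ) (A : E →ₗ[ℝ] E) :
    IsTwoForm (pullback A φ) :=
  ⟨fun x y z => by simp only [_root_.pullback, map_add, h.1],
    fun c x y => by simp only [_root_.pullback, map_smul, h.2.1],
    fun x y => h.2.2 _ _⟩

lemma pullback_apply_eq_toBilin {φ : E → E → ℝ} (h : IsTwoForm φ) (A : E →ₗ[ℝ] E) (x y : E) :
    pullback A φ x y = h.toBilin (A x) (A y) := rfl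

lemma pullback_pullback_of_sq_eq_neg {J : E →ₗ[ℝ] E} (hJ2 : ∀ x, J (J x) = -x)
    {φ : E → E → ℝ} (h : IsTwoForm φ) : pullback J (pullback J φ) = φ := by
  ext x y
  rw [pullback, pullback, hJ2, hJ2, ← neg_one_smul ℝ x, ← neg_one_smul ℝ y, h.2.1, h.smul_right]
  ring

lemma pullback_smul_sub_pullback {J : E →ₗ[ℝ] E} (hJ2 : ∀ x, J (J x) = -x) {φ : E → E → ℝ}
    (hφ : IsTwoForm φ) (c : ℝ) :
    pullback J (c • (φ - pullback J φ)) = -(c • (φ - pullback J φ)) := by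
  have hJJ : pullback J (pullback J φ) = φ := pullback_pullback_of_sq_eq_neg hJ2 hφ
  ext x y
  have := congrFun₂ hJJ x y
  simp only [pullback, Pi.smul_apply, Pi.sub_apply, Pi.neg_apply, smul_eq_mul] at this ⊢
  rw [this]; ring

namespace IsLeftMulQuaternion

variable {J : E →ₗ[ℝ] E} {a b c : ℝ} (hJ : IsLeftMulQuaternion J a b c)
  {φ : E → E → ℝ} (hφ : IsTwoForm φ)
include hJ hφ

lemma formInner_omg : formInner φ (Omg J) =
    a * (φ (e 0) (e 1) + φ (e 2) (e 3)) + b * (φ (e 0) (e 2) + φ (e 3) (e 1))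
      + c * (φ (e 0) (e 3) + φ (e 1) (e 2)) := by
  simp only [formInner, Omg, Fin.sum_univ_four, hJ.apply_e0, hJ.apply_e1, hJ.apply_e2,
    hJ.apply_e3, inner_add_left, inner_sub_left, real_inner_smul_left, inner_e_e]
  simp only [hφ.apply_self, hφ.2.2 (e 1) (e 0), hφ.2.2 (e 2) (e 0), hφ.2.2 (e 3) (e 0),
    hφ.2.2 (e 2) (e 1), hφ.2.2 (e 1) (e 3), hφ.2.2 (e 3) (e 2)]
  simp only [Fin.reduceEq, ↓reduceIte]
  ring

lemma formInner_omg_eq_zero (h : AntiSelfDual φ) : formInner φ (Omg J) = 0 := by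
  rw [hJ.formInner_omg hφ, h.1, h.2.1, h.2.2]; ring

lemma selfDual_sub_pullback : SelfDual (φ - pullback J φ) := by
  simp only [SelfDual, Pi.sub_apply, pullback_apply_eq_toBilin hφ, hJ.apply_e0, hJ.apply_e1,
    hJ.apply_e2, hJ.apply_e3, map_add, map_sub, map_smul, LinearMap.add_apply, LinearMap.sub_apply,
    LinearMap.smul_apply, smul_eq_mul, IsTwoForm.toBilin_apply]
  simp only [hφ.apply_self, hφ.2.2 (e 1) (e 0), hφ.2.2 (e 2) (e 0), hφ.2.2 (e 3) (e 0),
    hφ.2.2 (e 2) (e 1), hφ.2.2 (e 1) (e 3), hφ.2.2 (e 3) (e 2)]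
  refine ⟨?_, ?_, ?_⟩
  · linear_combination (φ (e 2) (e 3) - φ (e 0) (e 1)) * hJ.sq_add_sq_add_sq
  · linear_combination (φ (e 3) (e 1) - φ (e 0) (e 2)) * hJ.sq_add_sq_add_sq
  · linear_combination (φ (e 1) (e 2) - φ (e 0) (e 3)) * hJ.sq_add_sq_add_sq

lemma antiSelfDual_add_pullback (hΩ : formInner φ (Omg J) = 0) :
    AntiSelfDual (φ + pullback J φ) := by
  rw [hJ.formInner_omg hφ] at hΩ
  simp only [AntiSelfDual, Pi.add_apply, pullback_apply_eq_toBilin hφ, hJ.apply_e0, hJ.apply_e1,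
    hJ.apply_e2, hJ.apply_e3, map_add, map_sub, map_smul, LinearMap.add_apply, LinearMap.sub_apply,
    LinearMap.smul_apply, smul_eq_mul, IsTwoForm.toBilin_apply]
  simp only [hφ.apply_self, hφ.2.2 (e 1) (e 0), hφ.2.2 (e 2) (e 0), hφ.2.2 (e 3) (e 0),
    hφ.2.2 (e 2) (e 1), hφ.2.2 (e 1) (e 3), hφ.2.2 (e 3) (e 2)]
  refine ⟨?_, ?_, ?_⟩
  · linear_combination 2 * a * hΩ - (φ (e 0) (e 1) + φ (e 2) (e 3)) * hJ.sq_add_sq_add_sq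
  · linear_combination 2 * b * hΩ - (φ (e 0) (e 2) + φ (e 3) (e 1)) * hJ.sq_add_sq_add_sq
  · linear_combination 2 * c * hΩ - (φ (e 0) (e 3) + φ (e 1) (e 2)) * hJ.sq_add_sq_add_sq

end IsLeftMulQuaternion

section Curvature

variable (R : E →ₗ[ℝ] E →ₗ[ℝ] E →ₗ[ℝ] E →ₗ[ℝ] ℝ)

lemma isTwoForm_RF (hR1 : ∀ X Y Z W, R X Y Z W = -R Y X Z W) (ψ : E → E → ℝ) :
    IsTwoForm (RF R ψ) := by
  refine ⟨fun x y z => ?_, fun t x y => ?_, fun x y => ?_⟩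
  · simp only [RF, map_add, LinearMap.add_apply, add_mul, Finset.sum_add_distrib, mul_add]
  · simp only [RF, map_smul, LinearMap.smul_apply, smul_eq_mul, mul_assoc, ← Finset.mul_sum]
    ring
  · simp only [RF, hR1 x y, neg_mul, Finset.sum_neg_distrib, mul_neg]

lemma formInner_RF_comm (hRs : ∀ X Y Z W, R X Y Z W = R Z W X Y) (φ χ : E → E → ℝ) :
    formInner (RF R φ) χ = formInner (RF R χ) φ := by
  have expand (φ χ : E → E → ℝ) : formInner (RF R φ) χ = (1 / 4) * ∑ p : Fin 4 × Fin 4,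
      ∑ q : Fin 4 × Fin 4,
        R (e p.1) (e p.2) (e q.1) (e q.2) * φ (e q.1) (e q.2) * χ (e p.1) (e p.2) := by
    simp only [formInner, RF, Fintype.sum_prod_type, Finset.mul_sum, Finset.sum_mul]
    ring_nf
  rw [expand, expand, Finset.sum_comm]
  congr 1
  refine Finset.sum_congr rfl fun p _ => Finset.sum_congr rfl fun q _ => ?_
  rw [hRs]; ring

end Curvature

theorem stmt_15_general (J : E →ₗ[ℝ] E) (hJ2 : ∀ x, J (J x) = -x)
    (hJo : ∀ x y : E, ⟪J x, J y⟫ = ⟪x, y⟫)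
    (horient : 0 < ⟪J (e 0), e 1⟫ * ⟪J (e 2), e 3⟫ - ⟪J (e 0), e 2⟫ * ⟪J (e 1), e 3⟫
      + ⟪J (e 0), e 3⟫ * ⟪J (e 1), e 2⟫)
    (R : E →ₗ[ℝ] E →ₗ[ℝ] E →ₗ[ℝ] E →ₗ[ℝ] ℝ)
    (hR1 : ∀ X Y Z W, R X Y Z W = -R Y X Z W)
    (hRs : ∀ X Y Z W, R X Y Z W = R Z W X Y)
    -- W⁺₂ = 0
    (hW2 : ∀ ψ : E → E → ℝ, IsTwoForm ψ → SelfDual ψ →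
      (∀ x y, ψ (J x) (J y) = -ψ x y) → formInner (RF R (Omg J)) ψ = 0) :
    ∀ ψ : E → E → ℝ, IsTwoForm ψ → SelfDual ψ →
      (∀ x y, ψ (J x) (J y) = -ψ x y) →
      formInner (RF R ψ) (Omg J) = 0 ∧
      ∃ α β : E → E → ℝ,
        (IsTwoForm α ∧ SelfDual α ∧ ∀ x y, α (J x) (J y) = -α x y) ∧
        (IsTwoForm β ∧ AntiSelfDual β ∧ formInner β (Omg J) = 0) ∧
        ∀ x y, RF R ψ x y = α x y + β x y := by
  intro ψ hψ hψsd hψJ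
  obtain ⟨a, b, c, hJ⟩ := exists_isLeftMulQuaternion hJ2 hJo horient
  set φ := RF R ψ
  have hφ : IsTwoForm φ := isTwoForm_RF R hR1 ψ
  have hφΩ : formInner φ (Omg J) = 0 := by
    rw [formInner_RF_comm R hRs]
    exact hW2 ψ hψ hψsd hψJ
  have hβ : IsTwoForm ((1 / 2 : ℝ) • (φ + pullback J φ)) := (hφ.add (hφ.pullback J)).smul _
  have hβasd : AntiSelfDual ((1 / 2 : ℝ) • (φ + pullback J φ)) :=
    (hJ.antiSelfDual_add_pullback hφ hφΩ).smul _
  refine ⟨hφΩ, (1 / 2 : ℝ) • (φ - pullback J φ), (1 / 2 : ℝ) • (φ + pullback J φ),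
    ⟨(hφ.sub (hφ.pullback J)).smul _, (hJ.selfDual_sub_pullback hφ).smul _,
      fun x y => congrFun₂ (pullback_smul_sub_pullback hJ2 hφ _) x y⟩,
    ⟨hβ, hβasd, hJ.formInner_omg_eq_zero hβ hβasd⟩, fun x y => ?_⟩
  simp only [Pi.smul_apply, Pi.add_apply, Pi.sub_apply, smul_eq_mul]
  ring

/-- Pointwise (algebraic) form of Lemma 1's setting: if the curvature tensor `R` of
an almost Hermitian 4-manifold has `J`-invariant Ricci tensor and `W⁺₂ = 0` (i.e.
`R(Ω)` pairs to zero with every `J`-anti-invariant self-dual 2-form), then for every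
`J`-anti-invariant self-dual 2-form `ψ`, `R(ψ)` is a `J`-anti-invariant self-dual
2-form plus an anti-self-dual 2-form whose inner product with `Ω` vanishes; more
precisely `⟨R(ψ), Ω⟩ = 0`. -/
theorem stmt_15 (J : E →ₗ[ℝ] E) (hJ2 : ∀ x, J (J x) = -x)
    (hJo : ∀ x y : E, ⟪J x, J y⟫ = ⟪x, y⟫)
    (horient : 0 < ⟪J (e 0), e 1⟫ * ⟪J (e 2), e 3⟫ - ⟪J (e 0), e 2⟫ * ⟪J (e 1), e 3⟫
      + ⟪J (e 0), e 3⟫ * ⟪J (e 1), e 2⟫)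
    (R : E →ₗ[ℝ] E →ₗ[ℝ] E →ₗ[ℝ] E →ₗ[ℝ] ℝ)
    (hR1 : ∀ X Y Z W, R X Y Z W = -R Y X Z W)
    (hR2 : ∀ X Y Z W, R X Y Z W = -R X Y W Z)
    (hRs : ∀ X Y Z W, R X Y Z W = R Z W X Y)
    (hBianchi : ∀ X Y Z W, R X Y Z W + R Y Z X W + R Z X Y W = 0)
    -- the Ricci tensor is J-invariant
    (hRic : ∀ X Y : E, (∑ i : Fin 4, R (e i) (J X) (J Y) (e i))
      = ∑ i : Fin 4, R (e i) X Y (e i))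
    -- W⁺₂ = 0
    (hW2 : ∀ ψ : E → E → ℝ, IsTwoForm ψ → SelfDual ψ →
      (∀ x y, ψ (J x) (J y) = -ψ x y) → formInner (RF R (Omg J)) ψ = 0) :
    ∀ ψ : E → E → ℝ, IsTwoForm ψ → SelfDual ψ →
      (∀ x y, ψ (J x) (J y) = -ψ x y) →
      formInner (RF R ψ) (Omg J) = 0 ∧
      ∃ α β : E → E → ℝ,
        (IsTwoForm α ∧ SelfDual α ∧ ∀ x y, α (J x) (J y) = -α x y) ∧
        (IsTwoForm β ∧ AntiSelfDual β ∧ formInner β (Omg J) = 0) ∧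
        ∀ x y, RF R ψ x y = α x y + β x y :=
  stmt_15_general J hJ2 hJo horient R hR1 hRs hW2

end
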